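/- If u and v are twins (open twins: N(u)=N(v), or closed twins: N[u]=N[v]) each of degree at least 1 in a graph G, then both u and v belong to every monitoring edge-geodetic set of G. -/
import Mathlib


open SimpleGraph

/-- Two vertices `x` and `y` monitor an edge `e` in `G`: there is a shortest path between
them, and `e` lies on every shortest path between `x` and `y`. -/
def Monitors {V : Type*} (G : SimpleGraph V) (x y : V) (e : Sym2 V) : Prop :=
  (∃ p : G.Walk x y, p.IsPath ∧ p.length = G.dist x y) ∧
    ∀ p : G.Walk x y, p.IsPath → p.length = G.dist x y → e ∈ p.edges

/-- `S` is a monitoring edge-geodetic set of `G`. -/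
def IsMEGSet {V : Type*} (G : SimpleGraph V) (S : Set V) : Prop :=
  ∀ e ∈ G.edgeSet, ∃ x ∈ S, ∃ y ∈ S, Monitors G x y e

/-- The minimum size of a monitoring edge-geodetic set of `G`. -/
noncomputable def megNum {V : Type*} (G : SimpleGraph V) : ℕ :=
  sInf {n | ∃ S : Set V, IsMEGSet G S ∧ S.ncard = n}

/-- The set of leaves (degree-1 vertices) of `G`. -/
def leaves {V : Type*} (G : SimpleGraph V) : Set V :=
  {v | (G.neighborSet v).ncard = 1}


section Helpers

open SimpleGraph Walk

variable {V : Type*} {G : SimpleGraph V}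

private lemma edge_split {a b x y : V} (hab : G.Adj a b) :
    ∀ (p : G.Walk x y), s(a,b) ∈ p.edges →
      (∃ (p₁ : G.Walk x a) (p₂ : G.Walk b y), p = p₁.append (Walk.cons hab p₂)) ∨
      (∃ (p₁ : G.Walk x b) (p₂ : G.Walk a y), p = p₁.append (Walk.cons hab.symm p₂)) := by
  intro p hp
  induction p with
  | nil => simp at hp
  | @cons c d e h q ih =>
    rw [Walk.edges_cons, List.mem_cons] at hp
    rcases hp with he | he
    · rw [Sym2.eq_iff] at he
      rcases he with ⟨rfl, rfl⟩ | ⟨rfl, rfl⟩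
      · exact Or.inl ⟨Walk.nil, q, rfl⟩
      · exact Or.inr ⟨Walk.nil, q, rfl⟩
    · rcases ih he with ⟨p₁, p₂, rfl⟩ | ⟨p₁, p₂, rfl⟩
      · exact Or.inl ⟨Walk.cons h p₁, p₂, rfl⟩
      · exact Or.inr ⟨Walk.cons h p₁, p₂, rfl⟩

private lemma two_le_length {a b : V} (hne : a ≠ b) (hnadj : ¬ G.Adj a b) :
    ∀ (p : G.Walk a b), 2 ≤ p.length := by
  intro p
  cases p with
  | nil => exact absurd rfl hne
  | cons h q =>
    cases q with
    | nil => exact absurd h hnadj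
    | cons h' q' => simp [Walk.length_cons]

private lemma reassoc {a b c d : V} (h : G.Adj c d) (p₁ : G.Walk a c) (p₂ : G.Walk d b) :
    (p₁.append (Walk.cons h p₂)).reverse = p₂.reverse.append (Walk.cons h.symm p₁.reverse) := by
  rw [Walk.reverse_append, Walk.reverse_cons, ← Walk.append_assoc, Walk.cons_append, Walk.nil_append]

private lemma closed_surgery {u v x y : V}
    (hkey : ∀ b, b ≠ u → b ≠ v → (G.Adj u b ↔ G.Adj v b))
    (huv : G.Adj u v) (hx : x ≠ u)
    (p₁ : G.Walk x u) (p₂ : G.Walk v y)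
    (hp : (p₁.append (Walk.cons huv p₂)).IsPath) :
    ∃ q : G.Walk x y, q.length < p₁.length + 1 + p₂.length := by
  obtain ⟨a, ha, s, hs⟩ := Walk.exists_eq_cons_of_ne (Ne.symm hx) p₁.reverse
  have hnd := hp.support_nodup
  rw [Walk.support_append, Walk.support_cons, List.tail_cons] at hnd
  have hdisj := List.disjoint_of_nodup_append hnd
  have hav : a ∈ p₁.support := by
    have : a ∈ p₁.reverse.support := by rw [hs]; simp
    rwa [Walk.support_reverse, List.mem_reverse] at this
  have hane : a ≠ v := by
    intro h; subst h
    exact hdisj hav p₂.start_mem_support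
  have hadj : G.Adj a v := ((hkey a ha.ne' hane).mp ha).symm
  refine ⟨s.reverse.append (Walk.cons hadj p₂), ?_⟩
  have hl1 : p₁.length = s.length + 1 := by
    have := congrArg Walk.length hs
    simpa [Walk.length_reverse] using this
  simp [Walk.length_append, Walk.length_cons, Walk.length_reverse, hl1]
  omega

private lemma loop_path_edges {w : V} (p : G.Walk w w) (hp : p.IsPath) : p.edges = [] := by
  cases p with
  | nil => rfl
  | cons h r =>
    rw [Walk.cons_isPath_iff] at hp
    exact absurd r.end_mem_support hp.2

private lemma open_surgery {u v w x y : V} (huv : u ≠ v) (hnadj : ¬ G.Adj u v)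
    (hkey : ∀ b, G.Adj u b ↔ G.Adj v b)
    (huw : G.Adj u w) (hx : x ≠ u)
    (p₁ : G.Walk x u) (p₂ : G.Walk w y)
    (hp : (p₁.append (Walk.cons huw p₂)).IsPath)
    (hcond : x = v ∨ y = v ∨ s(v,w) ∈ (p₁.append (Walk.cons huw p₂)).edges) :
    ∃ q : G.Walk x y, q.length < p₁.length + 1 + p₂.length := by
  have hvw : G.Adj v w := (hkey w).mp huw
  have hnd := hp.support_nodup
  rw [Walk.support_append, Walk.support_cons, List.tail_cons] at hnd
  have hdisj := List.disjoint_of_nodup_append hnd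
  by_cases hxv : x = v
  · subst hxv
    refine ⟨Walk.cons hvw p₂, ?_⟩
    have := two_le_length huv.symm (fun h => hnadj h.symm) p₁
    simp [Walk.length_cons]
    omega
  -- predecessor of u
  obtain ⟨a, ha, s, hs⟩ := Walk.exists_eq_cons_of_ne (Ne.symm hx) p₁.reverse
  have has : a ∈ p₁.support := by
    have : a ∈ p₁.reverse.support := by rw [hs]; simp
    rwa [Walk.support_reverse, List.mem_reverse] at this
  have hl1 : p₁.length = s.length + 1 := by
    have := congrArg Walk.length hs
    simpa [Walk.length_reverse] using this
  by_cases hyv : y = v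
  · subst hyv
    have hane : a ≠ y := fun h => hdisj (h ▸ has) p₂.end_mem_support
    have hadj : G.Adj a y := ((hkey a).mp ha).symm
    refine ⟨s.reverse.append (Walk.cons hadj Walk.nil), ?_⟩
    simp [Walk.length_append, Walk.length_cons, Walk.length_reverse, hl1]
    omega
  · have hevw : s(v,w) ∈ (p₁.append (Walk.cons huw p₂)).edges := by tauto
    rw [Walk.edges_append, Walk.edges_cons, List.mem_append, List.mem_cons] at hevw
    have hevw' : s(v,w) ∈ p₂.edges := by
      rcases hevw with h1 | h1 | h1
      · exact absurd (hdisj (p₁.snd_mem_support_of_mem_edges h1) p₂.start_mem_support) (fun f => f)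
      · rw [Sym2.eq_iff] at h1
        rcases h1 with ⟨rfl, _⟩ | ⟨rfl, rfl⟩
        · exact absurd rfl huv
        · exact absurd huw hnadj
      · exact h1
    -- p₂ starts with edge w v
    have hp₂ : p₂.IsPath := (hp.of_append_right).of_cons
    have hwy : w ≠ y := by
      rintro rfl
      rw [loop_path_edges p₂ hp₂] at hevw'
      simp at hevw'
    obtain ⟨z, hz, r, hr⟩ := Walk.exists_eq_cons_of_ne hwy p₂
    have hzv : z = v := by
      subst hr
      rw [Walk.edges_cons, List.mem_cons] at hevw'
      rcases hevw' with h1 | h1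
      · rw [Sym2.eq_iff] at h1
        rcases h1 with ⟨h2, -⟩ | ⟨h3, -⟩
        · exact absurd h2 (G.ne_of_adj hvw)
        · exact h3.symm
      · rw [Walk.cons_isPath_iff] at hp₂
        exact absurd (r.snd_mem_support_of_mem_edges h1) hp₂.2
    have hzv' : v = z := hzv.symm
    subst hzv'
    subst hr
    have hane : a ≠ v := fun h => hdisj (h ▸ has)
      (by rw [Walk.support_cons]; exact List.mem_cons_of_mem _ r.start_mem_support)
    have hadj : G.Adj a v := ((hkey a).mp ha).symm
    refine ⟨s.reverse.append (Walk.cons hadj r), ?_⟩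
    simp [Walk.length_append, Walk.length_cons, Walk.length_reverse, hl1]

private lemma closed_pair {u v : V} (huv : u ≠ v) (hadj : G.Adj u v)
    (hkey : ∀ b, b ≠ u → b ≠ v → (G.Adj u b ↔ G.Adj v b))
    {x y : V} (hm : Monitors G x y s(u,v)) : x = u ∨ y = u := by
  by_contra hc
  push_neg at hc
  obtain ⟨hx, hy⟩ := hc
  obtain ⟨⟨p, hp, hl⟩, hall⟩ := hm
  have he := hall p hp hl
  rcases edge_split hadj p he with ⟨p₁, p₂, rfl⟩ | ⟨p₁, p₂, rfl⟩
  · obtain ⟨q, hq⟩ := closed_surgery hkey hadj hx p₁ p₂ hp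
    have hd := G.dist_le q
    rw [← hl] at hd
    simp [Walk.length_append, Walk.length_cons] at hd hq
    omega
  · have hp' : ((p₂.reverse).append (Walk.cons hadj p₁.reverse)).IsPath := by
      have h2 := hp.reverse
      rw [reassoc] at h2
      exact h2
    obtain ⟨q, hq⟩ := closed_surgery hkey hadj hy p₂.reverse p₁.reverse hp'
    have hd := G.dist_le q
    rw [SimpleGraph.dist_comm, ← hl] at hd
    simp [Walk.length_append, Walk.length_cons, Walk.length_reverse] at hd hq
    omega

private lemma open_pair {u v w : V} (huv : u ≠ v) (hnadj : ¬ G.Adj u v)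
    (hkey : ∀ b, G.Adj u b ↔ G.Adj v b) (huw : G.Adj u w)
    {x y : V} (hm : Monitors G x y s(u,w)) : x = u ∨ y = u := by
  classical
  by_contra hc
  push_neg at hc
  obtain ⟨hx, hy⟩ := hc
  obtain ⟨⟨p, hp, hl⟩, hall⟩ := hm
  have he := hall p hp hl
  by_cases hcond : x = v ∨ y = v ∨ s(v,w) ∈ p.edges
  · rcases edge_split huw p he with ⟨p₁, p₂, rfl⟩ | ⟨p₁, p₂, rfl⟩
    · obtain ⟨q, hq⟩ := open_surgery huv hnadj hkey huw hx p₁ p₂ hp hcond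
      have hd := G.dist_le q
      rw [← hl] at hd
      simp [Walk.length_append, Walk.length_cons] at hd hq
      omega
    · have hp' : ((p₂.reverse).append (Walk.cons huw p₁.reverse)).IsPath := by
        have h2 := hp.reverse
        rw [reassoc] at h2
        exact h2
      have hrev : ((p₂.reverse).append (Walk.cons huw p₁.reverse))
          = (p₁.append (Walk.cons huw.symm p₂)).reverse := by
        rw [reassoc]
      have hcond' : y = v ∨ x = v ∨
          s(v,w) ∈ ((p₂.reverse).append (Walk.cons huw p₁.reverse)).edges := by
        rcases hcond with h | h | h
        · exact Or.inr (Or.inl h)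
        · exact Or.inl h
        · refine Or.inr (Or.inr ?_)
          rw [hrev, Walk.edges_reverse, List.mem_reverse]
          exact h
      obtain ⟨q, hq⟩ := open_surgery huv hnadj hkey huw hy p₂.reverse p₁.reverse hp' hcond'
      have hd := G.dist_le q
      rw [SimpleGraph.dist_comm, ← hl] at hd
      simp [Walk.length_append, Walk.length_cons, Walk.length_reverse] at hd hq
      omega
  · push_neg at hcond
    obtain ⟨hxv, hyv, hnmem⟩ := hcond
    have hsym : ∀ a b, G.Adj a b → G.Adj (Equiv.swap u v a) (Equiv.swap u v b) := by
      intro a b hab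
      rcases eq_or_ne a u with hau | hau
      · rw [hau] at hab ⊢
        rw [Equiv.swap_apply_left]
        rcases eq_or_ne b v with hbv | hbv
        · rw [hbv] at hab
          exact absurd hab hnadj
        · rcases eq_or_ne b u with hbu | hbu
          · rw [hbu] at hab
            exact absurd hab (G.irrefl)
          · rw [Equiv.swap_apply_of_ne_of_ne hbu hbv]
            exact (hkey b).mp hab
      · rcases eq_or_ne a v with hav | hav
        · rw [hav] at hab ⊢
          rw [Equiv.swap_apply_right]
          rcases eq_or_ne b u with hbu | hbu
          · rw [hbu] at hab
            exact absurd hab.symm hnadj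
          · rcases eq_or_ne b v with hbv | hbv
            · rw [hbv] at hab
              exact absurd hab (G.irrefl)
            · rw [Equiv.swap_apply_of_ne_of_ne hbu hbv]
              exact (hkey b).mpr hab
        · rw [Equiv.swap_apply_of_ne_of_ne hau hav]
          rcases eq_or_ne b u with hbu | hbu
          · rw [hbu] at hab ⊢
            rw [Equiv.swap_apply_left]
            exact ((hkey a).mp hab.symm).symm
          · rcases eq_or_ne b v with hbv | hbv
            · rw [hbv] at hab ⊢
              rw [Equiv.swap_apply_right]
              exact ((hkey a).mpr hab.symm).symm
            · rw [Equiv.swap_apply_of_ne_of_ne hbu hbv]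
              exact hab
    let f : G →g G := ⟨fun z => Equiv.swap u v z, fun hab => hsym _ _ hab⟩
    have hinj : Function.Injective f := by
      intro a b hab
      exact (Equiv.swap u v).injective hab
    have hfx : f x = x := Equiv.swap_apply_of_ne_of_ne hx hxv
    have hfy : f y = y := Equiv.swap_apply_of_ne_of_ne hy hyv
    let q : G.Walk x y := (p.map f).copy hfx hfy
    have hqp : q.IsPath := by
      rw [Walk.isPath_copy]
      exact Walk.map_isPath_of_injective hinj hp
    have hql : q.length = G.dist x y := by
      simp only [q, Walk.length_copy, Walk.length_map]
      exact hl
    have hq := hall q hqp hql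
    rw [Walk.edges_copy, Walk.edges_map, List.mem_map] at hq
    obtain ⟨e, hep, hem⟩ := hq
    have hwu : w ≠ u := huw.ne'
    have hwv : w ≠ v := ((hkey w).mp huw).ne'
    have h2 := congrArg (Sym2.map (Equiv.swap u v)) hem
    rw [Sym2.map_map] at h2
    have h3 : Sym2.map ((Equiv.swap u v) ∘ f) e = e := by
      have hcomp : ((Equiv.swap u v : V → V) ∘ f) = id := by
        funext z
        show (Equiv.swap u v) ((Equiv.swap u v) z) = z
        exact Equiv.swap_apply_self _ _ _
      rw [hcomp, Sym2.map_id]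
      rfl
    rw [h3, Sym2.map_pair_eq, Equiv.swap_apply_left,
      Equiv.swap_apply_of_ne_of_ne hwu hwv] at h2
    exact hnmem (h2 ▸ hep)

end Helpers

theorem twins_mem_every_MEG {V : Type*} [Fintype V] (G : SimpleGraph V)
    (hG : G.Connected) (u v : V) (huv : u ≠ v)
    (htwin : G.neighborSet u = G.neighborSet v ∨
      insert u (G.neighborSet u) = insert v (G.neighborSet v))
    (hu : (G.neighborSet u).Nonempty) (hv : (G.neighborSet v).Nonempty) :
    ∀ S : Set V, IsMEGSet G S → u ∈ S ∧ v ∈ S := by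
  intro S hS
  rcases htwin with hN | hI
  · have key' : ∀ b, G.Adj u b ↔ G.Adj v b := by
      intro b
      rw [← SimpleGraph.mem_neighborSet, ← SimpleGraph.mem_neighborSet, hN]
    have hnadj : ¬ G.Adj u v := fun h => G.irrefl ((key' v).mp h)
    obtain ⟨w, hw⟩ := hu
    rw [SimpleGraph.mem_neighborSet] at hw
    have hvw : G.Adj v w := (key' w).mp hw
    constructor
    · obtain ⟨x, hxS, y, hyS, hm⟩ := hS s(u,w) (G.mem_edgeSet.mpr hw)
      rcases open_pair huv hnadj key' hw hm with h | h
      · exact h ▸ hxS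
      · exact h ▸ hyS
    · obtain ⟨x, hxS, y, hyS, hm⟩ := hS s(v,w) (G.mem_edgeSet.mpr hvw)
      rcases open_pair huv.symm (fun h => hnadj h.symm) (fun b => (key' b).symm) hvw hm with h | h
      · exact h ▸ hxS
      · exact h ▸ hyS
  · have hadj : G.Adj u v := by
      have h1 : u ∈ insert v (G.neighborSet v) := by
        rw [← hI]; exact Set.mem_insert _ _
      rcases Set.mem_insert_iff.mp h1 with h | h
      · exact absurd h huv
      · exact ((SimpleGraph.mem_neighborSet G v u).mp h).symm
    have key : ∀ b, b ≠ u → b ≠ v → (G.Adj u b ↔ G.Adj v b) := by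
      intro b hbu hbv
      constructor
      · intro h
        have hb : b ∈ insert v (G.neighborSet v) := by
          rw [← hI]; exact Set.mem_insert_of_mem _ h
        rcases Set.mem_insert_iff.mp hb with h' | h'
        · exact absurd h' hbv
        · exact h'
      · intro h
        have hb : b ∈ insert u (G.neighborSet u) := by
          rw [hI]; exact Set.mem_insert_of_mem _ h
        rcases Set.mem_insert_iff.mp hb with h' | h'
        · exact absurd h' hbu
        · exact h'
    obtain ⟨x, hxS, y, hyS, hm⟩ := hS s(u,v) (G.mem_edgeSet.mpr hadj)
    have hm' : Monitors G x y s(v,u) := by rwa [Sym2.eq_swap] at hm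
    have h1 := closed_pair huv hadj key hm
    have h2 := closed_pair huv.symm hadj.symm (fun b ha hb => (key b hb ha).symm) hm'
    constructor
    · rcases h1 with h | h
      · exact h ▸ hxS
      · exact h ▸ hyS
    · rcases h2 with h | h
      · exact h ▸ hxS
      · exact h ▸ hyS
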